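/- arXiv:2312.02584 — 2 statements merged into one kernel-verified Lean document; each statement's English description precedes it below -/
import Mathlib

section
/- Let $(W,S)$ be a Coxeter system, $h$ in the open fundamental chamber, and suppose the standard subgroup $W^{(i)}$ has infinite index in $W$. Then for every $t \leq \langle\omega_i, h\rangle$, the slice $P^{(i)}(t) = \operatorname{conv}(W\cdot h) \cap \{y : \langle\omega_i, y\rangle = t\}$ is nonempty. Equivalently, the set $\{\langle \omega_i, w(h)\rangle : w \in W\}$ is unbounded below. -/
/-!
For every `w`, the functional `ω_i ∘ w` equals `ω_i - ∑ m_k α_k` with `m_k ∈ ℕ`. This rests on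
the positivity of coroots: `w(α_j^∨)` is a nonnegative integer combination of simple coroots
whenever `ℓ(w s_j) > ℓ(w)`, proved by the classical reduction to dihedral subgroups. The same
positivity shows that the stabilizer of `ω_i` is exactly `W^{(i)}`. If `⟨ω_i, w h⟩` were bounded
below, then, as every `α_k(h) > 0`, the coefficients `m_k` would be bounded, so `ω_i` would have
a finite orbit and `W^{(i)}` finite index. Finally the image of `conv(W·h)` under `ω_i` is an
interval containing `⟨ω_i, h⟩` and arbitrarily small values.
-/

open scoped Pointwise

/-- The Coxeter matrix entry attached to a product `a_ij * a_ji` of entries of a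
generalized Cartan matrix, via the standard table (`0` encodes `∞`). -/
def gcmCoxeterEntry (p : ℤ) : ℕ :=
  if p = 0 then 2 else if p = 1 then 3 else if p = 2 then 4 else if p = 3 then 6 else 0

/-- The Weyl group of a symmetrizable generalized Cartan matrix, together with its action
on the real Cartan subalgebra of a free and cofree Kac–Moody root datum. -/
structure KMWeyl (n : ℕ) (V : Type*) [AddCommGroup V] [Module ℝ V]
    (W : Type*) [Group W] (M : CoxeterMatrix (Fin n)) where
  /-- the generalized Cartan matrix -/
  A : Matrix (Fin n) (Fin n) ℤ
  diag : ∀ i, A i i = 2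
  offDiag : ∀ i j, i ≠ j → A i j ≤ 0
  zeroIff : ∀ i j, (A i j = 0 ↔ A j i = 0)
  symmetrizable : ∃ D B : Matrix (Fin n) (Fin n) ℝ, D.IsDiag ∧ B.IsSymm ∧
    A.map (Int.cast : ℤ → ℝ) = D * B
  coxMat : ∀ i j, i ≠ j → M i j = gcmCoxeterEntry (A i j * A j i)
  /-- the Coxeter system structure on the Weyl group -/
  cs : CoxeterSystem M W
  /-- the linear action of the Weyl group on the Cartan subalgebra -/
  ρ : W →* (V →ₗ[ℝ] V)
  /-- the simple roots -/
  α : Fin n → (V →ₗ[ℝ] ℝ)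
  /-- the simple coroots -/
  cor : Fin n → V
  pairing : ∀ i j, α j (cor i) = (A i j : ℝ)
  refl : ∀ i v, ρ (cs.simple i) v = v - α i v • cor i
  freeRoots : LinearIndependent ℝ α
  cofree : LinearIndependent ℝ cor

namespace KMWeyl

variable {n : ℕ} {V : Type*} [AddCommGroup V] [Module ℝ V]
  {W : Type*} [Group W] {M : CoxeterMatrix (Fin n)}

/-- The orbit of a point `h` under the Weyl group. -/
def orb (K : KMWeyl n V W M) (h : V) : Set V := Set.range fun w => K.ρ w h

/-- The standard subgroup generated by the simple reflections indexed by `J`. -/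
def std (K : KMWeyl n V W M) (J : Set (Fin n)) : Subgroup W :=
  Subgroup.closure (K.cs.simple '' J)

/-- The support of `w`: the indices occurring in every reduced word for `w`. -/
def supp (K : KMWeyl n V W M) (w : W) : Set (Fin n) :=
  {i | ∀ l : List (Fin n), K.cs.wordProd l = w → l.length = K.cs.length w → i ∈ l}

end KMWeyl

theorem Subgroup.index_ne_zero_of_finite_range {G X : Type*} [Group G] {H : Subgroup G}
    (f : G → X) (hf : ∀ a b, f a = f b ↔ a⁻¹ * b ∈ H) (hfin : (Set.range f).Finite) :
    H.index ≠ 0 := by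
  have hrel : QuotientGroup.leftRel H = Setoid.ker f :=
    Setoid.ext fun a b => by rw [QuotientGroup.leftRel_apply, Setoid.ker_def, hf]
  have : Finite (Quotient (Setoid.ker f)) :=
    (Setoid.quotientKerEquivRange f).finite_iff.mpr hfin.to_subtype
  have : Finite (G ⧸ H) := by
    change Finite (Quotient (QuotientGroup.leftRel H))
    rwa [hrel]
  exact index_ne_zero_of_finite

theorem Convex.exists_apply_eq_of_mem_Icc {E : Type*} [AddCommGroup E] [Module ℝ E] {s : Set E}
    (hs : Convex ℝ s) (f : E →ₗ[ℝ] ℝ) {x y : E} (hx : x ∈ s) (hy : y ∈ s) {t : ℝ}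
    (ht : t ∈ Set.Icc (f x) (f y)) : ∃ z ∈ s, f z = t :=
  (hs.linear_image f).ordConnected.out ⟨x, hx, rfl⟩ ⟨y, hy, rfl⟩ ht

theorem Set.finite_nat_sum_mul_le {ι : Type*} [Fintype ι] {a : ι → ℝ} (ha : ∀ k, 0 < a k)
    (B : ℝ) : {m : ι → ℕ | ∑ k, m k * a k ≤ B}.Finite := by
  refine (Set.Finite.pi fun k => Set.finite_Iic ⌈B / a k⌉₊).subset fun m hm k _ => ?_
  have hk : m k * a k ≤ B :=
    (Finset.single_le_sum (fun r _ => mul_nonneg (m r).cast_nonneg (ha r).le)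
      (Finset.mem_univ k)).trans hm
  exact Nat.cast_le.mp (((le_div_iff₀ (ha k)).mpr hk).trans (Nat.le_ceil _))

namespace CoxeterSystem

variable {B W : Type*} [Group W] {M : CoxeterMatrix B} (cs : CoxeterSystem M W)

local prefix:100 "s" => cs.simple
local prefix:100 "π" => cs.wordProd
local prefix:100 "ℓ" => cs.length

theorem ascent_induction {p : W → Prop} (w : W) (one : p 1)
    (mul_simple : ∀ w i, ¬cs.IsRightDescent w i → p w → p (w * s i)) : p w := by
  induction hN : ℓ w using Nat.strong_induction_on generalizing w with
  | _ N ih =>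
  rcases eq_or_ne w 1 with rfl | hw
  · exact one
  obtain ⟨i, hi⟩ := cs.exists_rightDescent_of_ne_one hw
  have := mul_simple (w * s i) i (cs.isRightDescent_iff_not_isRightDescent_mul.mp hi)
    (ih _ (hN ▸ hi) _ rfl)
  rwa [simple_mul_simple_cancel_right] at this

theorem isReduced_of_length_mul_wordProd {u : W} {l : List B}
    (h : ℓ (u * π l) = ℓ u + l.length) : cs.IsReduced l :=
  le_antisymm (cs.length_wordProd_le l) (by linarith [cs.length_mul_le u (π l)])

theorem IsReduced.isChain_ne {cs : CoxeterSystem M W} :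
    ∀ {l : List B}, cs.IsReduced l → l.IsChain (· ≠ ·)
  | [], _ => .nil
  | [_], _ => .singleton _
  | a :: b :: l, hl => by
    have hbl : cs.IsReduced (b :: l) := hl.drop 1
    refine List.isChain_cons_cons.mpr ⟨?_, hbl.isChain_ne⟩
    rintro rfl
    have := cs.length_wordProd_le l
    simp only [IsReduced, wordProd_cons, simple_mul_simple_cancel_left, List.length_cons] at hl
    omega

theorem eq_alternatingWord_of_isChain_concat {j k : B} {l : List B}
    (hl : ∀ t ∈ l, t = j ∨ t = k) (hc : (l.concat j).IsChain (· ≠ ·)) :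
    l = alternatingWord j k l.length := by
  induction l using List.reverseRecOn generalizing j k with
  | nil => rfl
  | append_singleton l x ih =>
    simp only [List.concat_eq_append, List.append_assoc, List.cons_append, List.nil_append,
      List.isChain_append_cons_cons] at hc
    have hx : x = k := (hl x (by simp)).resolve_left hc.2.1
    subst hx
    have hl' := ih (fun t ht => (hl t (by simp [ht])).symm) (by simpa using hc.1)
    rw [List.length_append, List.length_singleton, alternatingWord_succ, ← hl',
      List.concat_eq_append]

theorem exists_eq_mul_wordProd_of_pair (j k : B) (w : W) :
    ∃ (u : W) (l : List B), (∀ t ∈ l, t = j ∨ t = k) ∧ w = u * π l ∧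
      ℓ u + l.length = ℓ w ∧ ¬cs.IsRightDescent u j ∧ ¬cs.IsRightDescent u k := by
  induction hN : ℓ w using Nat.strong_induction_on generalizing w with
  | _ N ih =>
  by_cases hd : ∃ t, (t = j ∨ t = k) ∧ cs.IsRightDescent w t
  · obtain ⟨t, ht, hwt⟩ := hd
    obtain ⟨u, l, hl, hw, hlen, hu⟩ := ih _ (hN ▸ hwt) (w * s t) rfl
    refine ⟨u, l.concat t, ?_, ?_, ?_, hu⟩
    · simpa [or_imp, forall_and] using ⟨hl, ht⟩
    · rw [wordProd_concat, ← mul_assoc, ← hw, simple_mul_simple_cancel_right]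
    · rw [List.length_concat, ← hN, ← (cs.isRightDescent_iff).mp hwt, ← hlen, add_assoc]
  · push Not at hd
    exact ⟨w, [], by simp, by simp, by simp [hN], hd j (.inl rfl), hd k (.inr rfl)⟩

end CoxeterSystem

namespace KMWeyl

open CoxeterSystem

variable {n : ℕ} {V : Type*} [AddCommGroup V] [Module ℝ V]
  {W : Type*} [Group W] {M : CoxeterMatrix (Fin n)} (K : KMWeyl n V W M)

theorem rho_mul_apply (a b : W) (v : V) : K.ρ (a * b) v = K.ρ a (K.ρ b v) := by
  rw [map_mul, Module.End.mul_apply]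

theorem mem_orb (h : V) (w : W) : K.ρ w h ∈ K.orb h := ⟨w, rfl⟩

theorem self_mem_orb (h : V) : h ∈ K.orb h := ⟨1, by simp⟩

def natCorootSpan : AddSubmonoid V := AddSubmonoid.closure (Set.range K.cor)

theorem cor_mem_natCorootSpan (j : Fin n) : K.cor j ∈ K.natCorootSpan :=
  AddSubmonoid.subset_closure ⟨j, rfl⟩

/-- Coordinates of `w(α_j^∨)` along `(α_j^∨, α_k^∨)` for `w = π (alternatingWord j k m)`, where
`u = -a_jk` and `q = -a_kj`. -/
def alternatingCoords (u q : ℤ) : ℕ → ℤ × ℤ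
  | 0 => (1, 0)
  | m + 1 =>
    let c := alternatingCoords u q m
    if Even m then (c.1, u * c.1 - c.2) else (q * c.2 - c.1, c.2)

theorem rho_alternatingWord_cor (j k : Fin n) (m : ℕ) :
    K.ρ (K.cs.wordProd (alternatingWord j k m)) (K.cor j) =
      (alternatingCoords (-K.A j k) (-K.A k j) m).1 • K.cor j +
        (alternatingCoords (-K.A j k) (-K.A k j) m).2 • K.cor k := by
  induction m with
  | zero => simp [alternatingCoords, alternatingWord]
  | succ m ih =>
    rw [alternatingWord_succ', wordProd_cons, rho_mul_apply, ih]
    by_cases hm : Even m <;>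
      simp [alternatingCoords, hm, K.refl, K.pairing, K.diag, ← Int.cast_smul_eq_zsmul ℝ] <;> module

theorem alternatingCoords_nonneg_of_four_le {u q : ℤ} (hu : 0 ≤ u) (hq : 0 ≤ q)
    (h4 : 4 ≤ u * q) (m : ℕ) :
    0 ≤ (alternatingCoords u q m).1 ∧ 0 ≤ (alternatingCoords u q m).2 := by
  -- The coordinate updated at the next step does not decrease.
  have key : ∀ m, 0 ≤ (alternatingCoords u q m).1 ∧ 0 ≤ (alternatingCoords u q m).2 ∧
      (Even m → 2 * (alternatingCoords u q m).2 ≤ u * (alternatingCoords u q m).1) ∧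
      (¬Even m → 2 * (alternatingCoords u q m).1 ≤ q * (alternatingCoords u q m).2) := by
    intro m
    induction m with
    | zero => simp [alternatingCoords, hu]
    | succ m ih =>
      simp only [alternatingCoords, Nat.even_add_one]
      generalize (alternatingCoords u q m).1 = a, (alternatingCoords u q m).2 = b at ih ⊢
      obtain ⟨ha, hb, heven, hodd⟩ := ih
      by_cases hm : Even m
      · have := heven hm
        simp only [hm, if_true, not_true_eq_false, not_false_eq_true, false_implies,
          true_implies, true_and]
        refine ⟨ha, by linarith, ?_⟩
        nlinarith [mul_nonneg hq (show 0 ≤ u * a - 2 * b by linarith),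
          mul_nonneg ha (show 0 ≤ u * q - 4 by linarith)]
      · have := hodd hm
        simp only [hm, if_false, not_true_eq_false, not_false_eq_true, false_implies,
          true_implies, and_true]
        refine ⟨by linarith, hb, ?_⟩
        nlinarith [mul_nonneg hu (show 0 ≤ q * b - 2 * a by linarith),
          mul_nonneg hb (show 0 ≤ u * q - 4 by linarith)]
  exact ⟨(key m).1, (key m).2.1⟩

theorem alternatingCoords_nonneg {u q : ℤ} (hu : 0 ≤ u) (hq : 0 ≤ q) {m : ℕ}
    (hm : gcmCoxeterEntry (u * q) = 0 ∨ m < gcmCoxeterEntry (u * q)) :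
    0 ≤ (alternatingCoords u q m).1 ∧ 0 ≤ (alternatingCoords u q m).2 := by
  rcases le_or_gt 4 (u * q) with h4 | h4
  · exact alternatingCoords_nonneg_of_four_le hu hq h4 m
  have huq := mul_nonneg hu hq
  replace hm : m < gcmCoxeterEntry (u * q) :=
    hm.resolve_left (by unfold gcmCoxeterEntry; split_ifs <;> simp; omega)
  rcases eq_or_lt_of_le hu with rfl | hu
  · simp only [zero_mul, gcmCoxeterEntry, if_true] at hm
    interval_cases m <;> simp [alternatingCoords]
  rcases eq_or_lt_of_le hq with rfl | hq
  · simp only [mul_zero, gcmCoxeterEntry, if_true] at hm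
    interval_cases m <;> simp [alternatingCoords, hu.le]
  have : u ≤ 3 := by nlinarith
  have : q ≤ 3 := by nlinarith
  interval_cases u <;> interval_cases q <;> (try norm_num at h4) <;>
    norm_num [gcmCoxeterEntry] at hm <;> interval_cases m <;> decide

theorem exists_rho_wordProd_cor_eq_of_pair {j k : Fin n} (hjk : j ≠ k) {l : List (Fin n)}
    (hl : ∀ t ∈ l, t = j ∨ t = k) (hred : K.cs.IsReduced (l.concat j)) :
    ∃ a b : ℕ, K.ρ (K.cs.wordProd l) (K.cor j) = a • K.cor j + b • K.cor k := by
  have hl_alt : l = alternatingWord j k l.length :=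
    eq_alternatingWord_of_isChain_concat hl hred.isChain_ne
  -- `l.concat j = alternatingWord k j (l.length + 1)` is reduced, so not longer than `m_jk`.
  have hM : M j k = 0 ∨ l.length < M j k := by
    by_contra! h
    rw [M.symmetric] at h
    refine K.cs.not_isReduced_alternatingWord k j h.1 (m := l.length + 1) (by omega) ?_
    rwa [alternatingWord_succ, ← hl_alt]
  rw [K.coxMat j k hjk, ← neg_mul_neg] at hM
  obtain ⟨ha, hb⟩ := alternatingCoords_nonneg (neg_nonneg.2 (K.offDiag j k hjk))
    (neg_nonneg.2 (K.offDiag k j hjk.symm)) hM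
  obtain ⟨a, ha⟩ := Int.eq_ofNat_of_zero_le ha
  obtain ⟨b, hb⟩ := Int.eq_ofNat_of_zero_le hb
  refine ⟨a, b, ?_⟩
  rw [hl_alt, K.rho_alternatingWord_cor, ha, hb, natCast_zsmul, natCast_zsmul]

theorem rho_cor_mem_natCorootSpan {w : W} {j : Fin n} (hj : ¬K.cs.IsRightDescent w j) :
    K.ρ w (K.cor j) ∈ K.natCorootSpan := by
  induction hN : K.cs.length w using Nat.strong_induction_on generalizing w j with
  | _ N ih =>
  rcases eq_or_ne w 1 with rfl | hw
  · simpa using K.cor_mem_natCorootSpan j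
  obtain ⟨k, hk⟩ := K.cs.exists_rightDescent_of_ne_one hw
  have hjk : j ≠ k := by rintro rfl; exact hj hk
  -- Write `w = u v` with `v ∈ ⟨s_j, s_k⟩` and `u` shorter than `w`: the rank-two computation
  -- handles `v`, the induction hypothesis handles `u`.
  obtain ⟨u, l, hl, rfl, hlen, huj, huk⟩ := K.cs.exists_eq_mul_wordProd_of_pair j k w
  have hl_ne : l ≠ [] := by
    rintro rfl
    rw [wordProd_nil, mul_one] at hk
    exact huk hk
  have hu : K.cs.length u < N := by
    have := List.length_pos_iff.2 hl_ne
    omega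
  have hred : K.cs.IsReduced (l.concat j) := by
    refine K.cs.isReduced_of_length_mul_wordProd (u := u) ?_
    rw [wordProd_concat, ← mul_assoc, (K.cs.not_isRightDescent_iff).1 hj, List.length_concat]
    omega
  obtain ⟨a, b, hab⟩ := K.exists_rho_wordProd_cor_eq_of_pair hjk hl hred
  rw [rho_mul_apply, hab, map_add, map_nsmul, map_nsmul]
  exact add_mem (nsmul_mem (ih _ hu huj rfl) a) (nsmul_mem (ih _ hu huk rfl) b)

section Coweight

variable {ω : Fin n → (V →ₗ[ℝ] ℝ)}

theorem exists_nat_eq_of_mem_natCorootSpan (hω : ∀ i j, ω i (K.cor j) = if i = j then 1 else 0)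
    (i : Fin n) {x : V} (hx : x ∈ K.natCorootSpan) : ∃ m : ℕ, ω i x = m := by
  induction hx using AddSubmonoid.closure_induction with
  | mem x hx =>
    obtain ⟨j, rfl⟩ := hx
    exact ⟨if i = j then 1 else 0, by rw [hω]; split_ifs <;> simp⟩
  | zero => exact ⟨0, by simp⟩
  | add x y _ _ hx hy =>
    obtain ⟨a, ha⟩ := hx
    obtain ⟨b, hb⟩ := hy
    exact ⟨a + b, by simp [ha, hb]⟩

theorem comp_rho_mul (φ : V →ₗ[ℝ] ℝ) (a b : W) :
    φ ∘ₗ K.ρ (a * b) = (φ ∘ₗ K.ρ a) ∘ₗ K.ρ b := by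
  rw [map_mul, Module.End.mul_eq_comp, LinearMap.comp_assoc]

theorem comp_rho_mul_simple (φ : V →ₗ[ℝ] ℝ) (w : W) (s : Fin n) :
    φ ∘ₗ K.ρ (w * K.cs.simple s) = φ ∘ₗ K.ρ w - φ (K.ρ w (K.cor s)) • K.α s := by
  ext v
  simp [K.refl, mul_comm]

theorem exists_comp_rho_eq_sub_sum (hω : ∀ i j, ω i (K.cor j) = if i = j then 1 else 0)
    (i : Fin n) (w : W) :
    ∃ m : Fin n → ℕ, ω i ∘ₗ K.ρ w = ω i - ∑ k, m k • K.α k := by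
  induction w using K.cs.ascent_induction with
  | one => exact ⟨0, by ext; simp⟩
  | mul_simple w s hs ih =>
    obtain ⟨m, hm⟩ := ih
    obtain ⟨d, hd⟩ :=
      K.exists_nat_eq_of_mem_natCorootSpan hω i (K.rho_cor_mem_natCorootSpan hs)
    refine ⟨m + Pi.single s d, ?_⟩
    rw [K.comp_rho_mul_simple, hm, hd]
    simp [add_smul, Finset.sum_add_distrib, Pi.single_apply, Nat.cast_smul_eq_nsmul, sub_sub]

def stabilizer (φ : V →ₗ[ℝ] ℝ) : Subgroup W where
  carrier := {w | φ ∘ₗ K.ρ w = φ}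
  mul_mem' {a b} (ha : _ = φ) (hb : _ = φ) := show _ = φ by rw [comp_rho_mul, ha, hb]
  one_mem' := show _ = φ by rw [map_one]; rfl
  inv_mem' {a} (ha : _ = φ) := show _ = φ by
    conv_lhs => rw [← ha, ← comp_rho_mul, mul_inv_cancel, map_one]
    rfl

theorem comp_rho_inv_eq_iff (φ : V →ₗ[ℝ] ℝ) (a b : W) :
    φ ∘ₗ K.ρ a⁻¹ = φ ∘ₗ K.ρ b⁻¹ ↔ a⁻¹ * b ∈ K.stabilizer φ := by
  change _ ↔ φ ∘ₗ K.ρ (a⁻¹ * b) = φ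
  constructor
  · intro h
    rw [comp_rho_mul, h, ← comp_rho_mul, inv_mul_cancel, map_one]
    rfl
  · intro h
    rw [← mul_inv_cancel_right a⁻¹ b, comp_rho_mul, h]

theorem std_eq_stabilizer (hω : ∀ i j, ω i (K.cor j) = if i = j then 1 else 0) (i : Fin n) :
    K.std {k | k ≠ i} = K.stabilizer (ω i) := by
  apply le_antisymm
  · refine (Subgroup.closure_le _).2 ?_
    rintro _ ⟨k, hk, rfl⟩
    change ω i ∘ₗ K.ρ (K.cs.simple k) = ω i
    ext v
    simp [K.refl, hω, Ne.symm hk]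
  · intro w
    induction w using K.cs.ascent_induction with
    | one => exact fun _ => one_mem _
    | mul_simple w s hs ih =>
      intro (hws : ω i ∘ₗ K.ρ (w * K.cs.simple s) = ω i)
      obtain ⟨d, hd⟩ :=
        K.exists_nat_eq_of_mem_natCorootSpan hω i (K.rho_cor_mem_natCorootSpan hs)
      -- Evaluating at `α_s^∨`: `δ_is = -ω_i(w α_s^∨) ≤ 0`, so `s ≠ i` and `w` fixes `ω_i`.
      have hstep := K.comp_rho_mul_simple (ω i) w s
      have hcor := LinearMap.congr_fun hstep (K.cor s)
      simp only [hws, hω, hd, LinearMap.sub_apply, LinearMap.smul_apply, LinearMap.comp_apply,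
        K.pairing, K.diag, smul_eq_mul] at hcor
      have hi : i ≠ s := by
        rintro rfl
        simp only [if_true, Int.cast_ofNat] at hcor
        linarith [d.cast_nonneg (α := ℝ)]
      have hw : ω i ∘ₗ K.ρ w = ω i := by
        have hd0 : (d : ℝ) = 0 := by
          simp only [hi, if_false, Int.cast_ofNat] at hcor
          linarith [d.cast_nonneg (α := ℝ)]
        rw [hws, hd, hd0, zero_smul, sub_zero] at hstep
        exact hstep.symm
      exact mul_mem (ih hw) (Subgroup.subset_closure ⟨s, hi.symm, rfl⟩)

theorem finite_range_comp_rho {h : V} (hC : ∀ k, 0 < K.α k h)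
    (hω : ∀ i j, ω i (K.cor j) = if i = j then 1 else 0) (i : Fin n) {t : ℝ}
    (ht : ∀ w, t ≤ ω i (K.ρ w h)) : (Set.range fun w => ω i ∘ₗ K.ρ w).Finite := by
  refine ((Set.finite_nat_sum_mul_le hC (ω i h - t)).image
    fun m => ω i - ∑ k, m k • K.α k).subset ?_
  rintro _ ⟨w, rfl⟩
  obtain ⟨m, hm⟩ := K.exists_comp_rho_eq_sub_sum hω i w
  refine ⟨m, ?_, hm.symm⟩
  have hwh := LinearMap.congr_fun hm h
  simp only [LinearMap.comp_apply, LinearMap.sub_apply, LinearMap.sum_apply,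
    LinearMap.smul_apply, nsmul_eq_mul] at hwh
  change ∑ k, (m k : ℝ) * K.α k h ≤ ω i h - t
  linarith [ht w]

end Coweight

end KMWeyl

/-- Infinite-index case: if `W^{(i)}` has infinite index in `W`, then every slice
`P^{(i)}(t)` with `t ≤ ⟨ω_i, h⟩` is nonempty; equivalently `{⟨ω_i, w(h)⟩}` is unbounded
below. -/
theorem stmt_13 {n : ℕ} {V : Type*} [AddCommGroup V] [Module ℝ V]
    {W : Type*} [Group W] {M : CoxeterMatrix (Fin n)} (K : KMWeyl n V W M)
    (h : V) (hC : ∀ i, 0 < K.α i h)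
    (ω : Fin n → (V →ₗ[ℝ] ℝ)) (hω : ∀ i j, ω i (K.cor j) = if i = j then 1 else 0)
    (i : Fin n) (hinf : (K.std {k | k ≠ i}).index = 0) :
    (∀ t : ℝ, t ≤ ω i h → ∃ y ∈ convexHull ℝ (K.orb h), ω i y = t) ∧
    (∀ t : ℝ, ∃ w : W, ω i (K.ρ w h) ≤ t) := by
  have hunbdd : ∀ t : ℝ, ∃ w : W, ω i (K.ρ w h) ≤ t := by
    by_contra! ⟨t, ht⟩
    refine Subgroup.index_ne_zero_of_finite_range (fun w => ω i ∘ₗ K.ρ w⁻¹) (fun a b => ?_)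
      ?_ hinf
    · rw [K.std_eq_stabilizer hω, K.comp_rho_inv_eq_iff]
    · exact (K.finite_range_comp_rho hC hω i fun w => (ht w).le).subset
        (Set.range_subset_iff.2 fun w => ⟨w⁻¹, rfl⟩)
  refine ⟨fun t ht => ?_, hunbdd⟩
  obtain ⟨w, hw⟩ := hunbdd t
  exact (convex_convexHull ℝ _).exists_apply_eq_of_mem_Icc (ω i)
    (subset_convexHull ℝ _ (K.mem_orb h w)) (subset_convexHull ℝ _ (K.self_mem_orb h)) ⟨hw, ht⟩
end

section
/- Let $\mathbb{A}$ be an invertible symmetrizable GCM of size $n$ whose decomposition into indecomposable blocks contains a block of indefinite type, and let $W$ be its Weyl group acting on $\mathfrak{a} = \bigoplus_i \mathbb{R}\alpha_i^\vee$. Then for every $h$ in the open fundamental chamber $C$ (i.e. $\mathbb{A}^T\lambda > 0$ for the coordinate vector $\lambda$ of $h$ in the coroot basis), at least one coordinate $\lambda_j$ is negative; consequently $0 \notin \operatorname{conv}(W \cdot h)$. -/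
open scoped Pointwise

/-- Adjacency between indices of a GCM (nonzero off-diagonal entry). -/
def matAdj {n : ℕ} (A : Matrix (Fin n) (Fin n) ℤ) (i j : Fin n) : Prop :=
  i ≠ j ∧ A i j ≠ 0

/-- The connected component of `i` among the indecomposable blocks of a GCM. -/
def matComp {n : ℕ} (A : Matrix (Fin n) (Fin n) ℤ) (i : Fin n) : Set (Fin n) :=
  {j | Relation.ReflTransGen (matAdj A) i j}

/-! If all `λ_j ≥ 0`, the restriction `μ` of `λ` to the indefinite block satisfies `μ ≥ 0` and
`Aᵀμ ≥ 0` on the block, so `μ = 0`; but then `⟨α_k, h⟩ = 0` for `k` in the block, contradicting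
`h ∈ C`.

For the convex hull: for dominant `h` one has `⟨α_i, w h⟩ ≥ 0` whenever `ℓ(s_i w) > ℓ(w)`
(write `w = u w'` with `u` the longest prefix of `w` in the rank-two subgroup `⟨s_i, s_j⟩`, `s_j` a
left descent of `w`, and compute in rank two, where reducedness of `s_i u` bounds the length of `u`
by the dihedral order). Inducting along a reduced word, `w h ∈ h - ∑_l ℝ≥0 α_l^∨`, so the `j`-th
coroot coordinate is at most `λ_j < 0` on `W·h`, hence on its convex hull, whereas it vanishes
at `0`. -/

namespace CoxeterSystem

variable {B : Type*} {M : CoxeterMatrix B} {W : Type*} [Group W] (cs : CoxeterSystem M W)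

local prefix:100 "s" => cs.simple
local prefix:100 "π" => cs.wordProd
local prefix:100 "ℓ" => cs.length

theorem exists_alternatingWord_mul_of_not_isLeftDescent (w : W) (i j : B)
    (hi : ¬cs.IsLeftDescent w i) :
    ∃ (q : ℕ) (w' : W), w = π (alternatingWord i j q).reverse * w' ∧ ℓ w = q + ℓ w' ∧
      ¬cs.IsLeftDescent w' i ∧ ¬cs.IsLeftDescent w' j ∧
      cs.IsReduced (i :: (alternatingWord i j q).reverse) := by
  induction hN : ℓ w using Nat.strong_induction_on generalizing w i j with
  | _ N ih =>
  subst hN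
  by_cases hj : cs.IsLeftDescent w j
  · have hlen : ℓ (s j * w) + 1 = ℓ w := cs.isLeftDescent_iff.mp hj
    obtain ⟨q, w', hw, hl, hj', hi', -⟩ := ih _ (by omega)
      (s j * w) j i (cs.isLeftDescent_iff_not_isLeftDescent_mul.mp hj) rfl
    have hw' : w = π (alternatingWord i j (q + 1)).reverse * w' := by
      rw [alternatingWord_succ, List.concat_eq_append, List.reverse_append, List.reverse_singleton,
        List.singleton_append, wordProd_cons, mul_assoc, ← hw, simple_mul_simple_cancel_left]
    refine ⟨q + 1, w', hw', by omega, hi', hj', ?_⟩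
    have hsi : ℓ (s i * w) = ℓ w + 1 := cs.not_isLeftDescent_iff.mp hi
    have hle := cs.length_wordProd_le (i :: (alternatingWord i j (q + 1)).reverse)
    have hge : ℓ (s i * w) ≤ ℓ (π (i :: (alternatingWord i j (q + 1)).reverse)) + ℓ w' := by
      rw [hw', ← mul_assoc, ← wordProd_cons]
      exact cs.length_mul_le _ _
    simp only [IsReduced, List.length_cons, List.length_reverse, length_alternatingWord] at hle ⊢
    omega
  · exact ⟨0, w, by simp [alternatingWord], by simp, hi, hj, by simp [alternatingWord, IsReduced]⟩

end CoxeterSystem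

/-- With `a = A i j` and `b = A j i`, these are the coordinates in the basis `α i, α j` of
`α i ∘ (s_j s_i s_j ⋯)` (a word of `q` letters), obtained by appending one letter at a time. -/
def rankTwoCoeff (a b : ℝ) : ℕ → ℝ × ℝ
  | 0 => (1, 0)
  | q + 1 =>
    let c := rankTwoCoeff a b q
    if Even q then (c.1, -c.2 - b * c.1) else (-c.1 - a * c.2, c.2)

theorem rankTwoCoeff_succ_of_even (a b : ℝ) {q : ℕ} (hq : Even q) :
    rankTwoCoeff a b (q + 1) =
      ((rankTwoCoeff a b q).1, -(rankTwoCoeff a b q).2 - b * (rankTwoCoeff a b q).1) := by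
  simp [rankTwoCoeff, hq]

theorem rankTwoCoeff_succ_of_not_even (a b : ℝ) {q : ℕ} (hq : ¬Even q) :
    rankTwoCoeff a b (q + 1) =
      (-(rankTwoCoeff a b q).1 - a * (rankTwoCoeff a b q).2, (rankTwoCoeff a b q).2) := by
  simp [rankTwoCoeff, hq]

theorem rankTwoCoeff_nonneg_of_four_le_mul {a b : ℝ} (ha : a ≤ -1) (hb : b ≤ -1)
    (hab : 4 ≤ a * b) (q : ℕ) :
    0 ≤ (rankTwoCoeff a b q).1 ∧ 0 ≤ (rankTwoCoeff a b q).2 ∧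
      (Even q → 2 * (rankTwoCoeff a b q).2 ≤ -b * (rankTwoCoeff a b q).1) ∧
      (¬Even q → 2 * (rankTwoCoeff a b q).1 ≤ -a * (rankTwoCoeff a b q).2) := by
  induction q with
  | zero => simp [rankTwoCoeff]; linarith
  | succ q ih =>
    obtain ⟨hx, hy, hev, hodd⟩ := ih
    by_cases hq : Even q
    · have hq' : ¬Even (q + 1) := by simpa [Nat.even_add_one] using hq
      have h := mul_le_mul_of_nonneg_left (hev hq) (by linarith : (0 : ℝ) ≤ -a)
      rw [rankTwoCoeff_succ_of_even a b hq]
      exact ⟨hx, by nlinarith, fun h' => absurd h' hq', fun _ => by nlinarith⟩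
    · have hq' : Even (q + 1) := Nat.even_add_one.mpr hq
      have h := mul_le_mul_of_nonneg_left (hodd hq) (by linarith : (0 : ℝ) ≤ -b)
      rw [rankTwoCoeff_succ_of_not_even a b hq]
      exact ⟨by nlinarith, hy, fun _ => by nlinarith, fun h' => absurd hq' h'⟩

theorem gcm_pair_of_mul_lt_four {a b : ℤ} (ha : a ≤ 0) (hb : b ≤ 0) (hab : a = 0 ↔ b = 0)
    (h4 : a * b < 4) :
    (a = 0 ∧ b = 0) ∨ (a = -1 ∧ b = -1) ∨ (a = -1 ∧ b = -2) ∨ (a = -2 ∧ b = -1) ∨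
      (a = -1 ∧ b = -3) ∨ (a = -3 ∧ b = -1) := by
  obtain rfl | ha' := ha.eq_or_lt
  · exact Or.inl ⟨rfl, hab.mp rfl⟩
  have hb' : b < 0 := hb.lt_of_ne (mt hab.mpr ha'.ne)
  have : -3 ≤ a := by nlinarith
  have : -3 ≤ b := by nlinarith
  interval_cases a <;> interval_cases b <;> omega

theorem rankTwoCoeff_nonneg {a b : ℤ} (ha : a ≤ 0) (hb : b ≤ 0) (hab : a = 0 ↔ b = 0) {q : ℕ}
    (hq : gcmCoxeterEntry (a * b) ≠ 0 → q < gcmCoxeterEntry (a * b)) :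
    0 ≤ (rankTwoCoeff a b q).1 ∧ 0 ≤ (rankTwoCoeff a b q).2 := by
  rcases lt_or_ge (a * b) 4 with h4 | h4
  · rcases gcm_pair_of_mul_lt_four ha hb hab h4 with ⟨rfl, rfl⟩ | ⟨rfl, rfl⟩ | ⟨rfl, rfl⟩ |
      ⟨rfl, rfl⟩ | ⟨rfl, rfl⟩ | ⟨rfl, rfl⟩ <;>
    · norm_num [gcmCoxeterEntry] at hq
      interval_cases q <;> norm_num [rankTwoCoeff, Nat.even_iff]
  · have ha1 : a ≤ -1 := by
      have : a ≠ 0 := by rintro rfl; omega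
      omega
    have hb1 : b ≤ -1 := by
      have : b ≠ 0 := by rintro rfl; omega
      omega
    have h := rankTwoCoeff_nonneg_of_four_le_mul (a := a) (b := b) (by exact_mod_cast ha1)
      (by exact_mod_cast hb1) (by exact_mod_cast h4) q
    exact ⟨h.1, h.2.1⟩

namespace KMWeyl

open CoxeterSystem

variable {n : ℕ} {V : Type*} [AddCommGroup V] [Module ℝ V]
  {W : Type*} [Group W] {M : CoxeterMatrix (Fin n)} (K : KMWeyl n V W M)

theorem α_apply_ρ_simple (i j : Fin n) (v : V) :
    K.α i (K.ρ (K.cs.simple j) v) = K.α i v - K.A j i * K.α j v := by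
  rw [K.refl, map_sub, map_smul, smul_eq_mul, K.pairing, mul_comm]

theorem α_apply_ρ_alternatingWord (i j : Fin n) (q : ℕ) (v : V) :
    K.α i (K.ρ (K.cs.wordProd (alternatingWord i j q).reverse) v) =
      (rankTwoCoeff (K.A i j) (K.A j i) q).1 * K.α i v +
        (rankTwoCoeff (K.A i j) (K.A j i) q).2 * K.α j v := by
  induction q generalizing v with
  | zero => simp [alternatingWord, rankTwoCoeff]
  | succ q ih =>
    rw [alternatingWord_succ', List.reverse_cons, wordProd_append, map_mul,
      Module.End.mul_apply, ih, wordProd_singleton]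
    by_cases hq : Even q
    · rw [if_pos hq, rankTwoCoeff_succ_of_even _ _ hq, K.α_apply_ρ_simple, K.α_apply_ρ_simple,
        K.diag]
      push_cast
      ring
    · rw [if_neg hq, rankTwoCoeff_succ_of_not_even _ _ hq, K.α_apply_ρ_simple,
        K.α_apply_ρ_simple, K.diag]
      push_cast
      ring

theorem rankTwoCoeff_nonneg_of_isReduced {i j : Fin n} (hij : i ≠ j) {q : ℕ}
    (hred : K.cs.IsReduced (i :: (alternatingWord i j q).reverse)) :
    0 ≤ (rankTwoCoeff (K.A i j) (K.A j i) q).1 ∧ 0 ≤ (rankTwoCoeff (K.A i j) (K.A j i) q).2 := by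
  refine rankTwoCoeff_nonneg (K.offDiag i j hij) (K.offDiag j i hij.symm) (K.zeroIff i j) ?_
  rw [← K.coxMat i j hij, M.symmetric]
  intro hM
  have hred' : K.cs.IsReduced (alternatingWord j i (q + 1)) := by
    rwa [← isReduced_reverse_iff, alternatingWord_succ, List.concat_eq_append,
      List.reverse_append, List.reverse_singleton, List.singleton_append]
  by_contra hq
  exact K.cs.not_isReduced_alternatingWord j i hM (by omega) hred'

theorem α_apply_ρ_nonneg {h : V} (hh : ∀ l, 0 ≤ K.α l h) (w : W) {i : Fin n}
    (hi : ¬K.cs.IsLeftDescent w i) : 0 ≤ K.α i (K.ρ w h) := by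
  induction hN : K.cs.length w using Nat.strong_induction_on generalizing w i with
  | _ N ih =>
  subst hN
  obtain rfl | hw := eq_or_ne w 1
  · simpa using hh i
  obtain ⟨j, hj⟩ := K.cs.exists_leftDescent_of_ne_one hw
  have hij : i ≠ j := by rintro rfl; exact hi hj
  obtain ⟨q, w', rfl, hl, hi', hj', hred⟩ :=
    K.cs.exists_alternatingWord_mul_of_not_isLeftDescent w i j hi
  have hq : q ≠ 0 := by rintro rfl; simp [alternatingWord] at hj; exact hj' hj
  obtain ⟨hx, hy⟩ := K.rankTwoCoeff_nonneg_of_isReduced hij hred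
  rw [map_mul, Module.End.mul_apply, K.α_apply_ρ_alternatingWord]
  have := ih _ (by omega) w' hi' rfl
  have := ih _ (by omega) w' hj' rfl
  positivity

theorem exists_ρ_apply_eq_sub_sum {h : V} (hh : ∀ l, 0 ≤ K.α l h) (w : W) :
    ∃ c : Fin n → ℝ, (∀ l, 0 ≤ c l) ∧ K.ρ w h = h - ∑ l, c l • K.cor l := by
  classical
  obtain ⟨ω, hω, rfl⟩ := K.cs.exists_isReduced w
  induction ω with
  | nil => exact ⟨0, fun _ => le_rfl, by simp⟩
  | cons j ω ih =>
    have hω' : K.cs.IsReduced ω := by simpa using hω.drop 1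
    obtain ⟨c, hc, hcω⟩ := ih hω'
    have hj : ¬K.cs.IsLeftDescent (K.cs.wordProd ω) j := by
      rw [not_isLeftDescent_iff, ← wordProd_cons, hω, hω']
      rfl
    set t := K.α j (K.ρ (K.cs.wordProd ω) h)
    refine ⟨c + Pi.single j t, fun l => add_nonneg (hc l) ?_, ?_⟩
    · rw [Pi.single_apply]
      split_ifs
      exacts [K.α_apply_ρ_nonneg hh _ hj, le_rfl]
    · rw [wordProd_cons, map_mul, Module.End.mul_apply, K.refl, hcω]
      simp only [Pi.add_apply, add_smul, Finset.sum_add_distrib, Pi.single_apply, ite_smul,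
        zero_smul, Finset.sum_ite_eq', Finset.mem_univ, if_true, t, hcω]
      abel

theorem α_sum_smul_cor (lam : Fin n → ℝ) (i : Fin n) :
    K.α i (∑ j, lam j • K.cor j) = ∑ j, (K.A j i : ℝ) * lam j := by
  simp only [map_sum, map_smul, smul_eq_mul, K.pairing, mul_comm]

end KMWeyl

theorem eq_zero_of_mem_matComp_of_notMem {n : ℕ} {A : Matrix (Fin n) (Fin n) ℤ}
    (hA : ∀ i j, A i j = 0 → A j i = 0) {k i l : Fin n} (hi : i ∈ matComp A k)
    (hl : l ∉ matComp A k) : A l i = 0 := by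
  by_contra hne
  exact hl (hi.tail ⟨by rintro rfl; exact hl hi, fun h0 => hne (hA i l h0)⟩)

theorem exists_neg_of_indefinite_block {n : ℕ} {A : Matrix (Fin n) (Fin n) ℤ}
    (hA : ∀ i j, A i j = 0 → A j i = 0) {k : Fin n}
    (hk : ∀ μ : Fin n → ℝ, (∀ j, j ∉ matComp A k → μ j = 0) → (∀ j, 0 ≤ μ j) →
      (∀ i ∈ matComp A k, 0 ≤ ∑ j, (A j i : ℝ) * μ j) → μ = 0)
    {lam : Fin n → ℝ} (hlam : ∀ i ∈ matComp A k, 0 < ∑ j, (A j i : ℝ) * lam j) :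
    ∃ j, lam j < 0 := by
  classical
  by_contra! hnonneg
  set μ : Fin n → ℝ := fun j => if j ∈ matComp A k then lam j else 0
  have hμ : ∀ i ∈ matComp A k, ∑ j, (A j i : ℝ) * μ j = ∑ j, (A j i : ℝ) * lam j := by
    refine fun i hi => Finset.sum_congr rfl fun j _ => ?_
    by_cases hj : j ∈ matComp A k
    · simp [μ, hj]
    · simp [μ, hj, eq_zero_of_mem_matComp_of_notMem hA hi hj]
  have hμ0 : μ = 0 := hk μ (fun j hj => if_neg hj)
    (fun j => by simp only [μ]; split_ifs <;> simp [hnonneg j])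
    (fun i hi => (hμ i hi ▸ hlam i hi).le)
  have hk0 := hlam k .refl
  rw [← hμ k .refl, hμ0] at hk0
  simp at hk0

theorem LinearIndependent.exists_dual_sum_smul_eq {ι K V : Type*} [Fintype ι] [Field K]
    [AddCommGroup V] [Module K V] {v : ι → V} (hv : LinearIndependent K v) (j : ι) :
    ∃ f : Module.Dual K V, ∀ c : ι → K, f (∑ l, c l • v l) = c j := by
  obtain ⟨f, hf⟩ := LinearMap.exists_extend ((Module.Basis.span hv).coord j)
  refine ⟨f, fun c => ?_⟩
  have hsum : ∑ l, c l • v l = (Submodule.span K (Set.range v)).subtype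
      (∑ l, c l • Module.Basis.span hv l) := by
    simp [Module.Basis.span_apply]
  rw [hsum, ← LinearMap.comp_apply, hf, Module.Basis.coord_apply, Module.Basis.repr_sum_self]

theorem zero_notMem_convexHull_of_le {𝕜 E : Type*} [Field 𝕜] [LinearOrder 𝕜]
    [IsStrictOrderedRing 𝕜] [AddCommGroup E] [Module 𝕜 E] {s : Set E} (f : E →ₗ[𝕜] 𝕜) {c : 𝕜}
    (hc : c < 0) (hs : ∀ x ∈ s, f x ≤ c) : (0 : E) ∉ convexHull 𝕜 s := fun h0 => by
  have h0c : f 0 ≤ c := convexHull_min hs (convex_halfSpace_le f.isLinear c) h0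
  exact (map_zero f ▸ h0c).not_gt hc

theorem stmt_17_general {n : ℕ} {V : Type*} [AddCommGroup V] [Module ℝ V]
    {W : Type*} [Group W] {M : CoxeterMatrix (Fin n)} (K : KMWeyl n V W M)
    (hblk : ∃ k : Fin n, ∀ μ : Fin n → ℝ,
      (∀ j, j ∉ matComp K.A k → μ j = 0) → (∀ j, 0 ≤ μ j) →
      (∀ i ∈ matComp K.A k, 0 ≤ ∑ j, (K.A j i : ℝ) * μ j) → μ = 0)
    (lam : Fin n → ℝ) (h : V) (hh : h = ∑ j, lam j • K.cor j)
    (hC : ∀ i, 0 < K.α i h) :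
    (∃ j, lam j < 0) ∧ (0 : V) ∉ convexHull ℝ (K.orb h) := by
  subst hh
  obtain ⟨k, hk⟩ := hblk
  obtain ⟨j, hj⟩ := exists_neg_of_indefinite_block (fun i j => (K.zeroIff i j).mp) hk
    (fun i _ => K.α_sum_smul_cor lam i ▸ hC i)
  refine ⟨⟨j, hj⟩, ?_⟩
  obtain ⟨f, hf⟩ := K.cofree.exists_dual_sum_smul_eq j
  refine zero_notMem_convexHull_of_le f hj ?_
  rintro _ ⟨w, rfl⟩
  dsimp only
  obtain ⟨c, hc, hw⟩ := K.exists_ρ_apply_eq_sub_sum (fun l => (hC l).le) w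
  rw [hw, map_sub, hf, hf]
  linarith [hc j]

/-- If an invertible symmetrizable GCM has an indecomposable block of indefinite type,
then every `h` in the open fundamental chamber has a negative coordinate in the coroot
basis; consequently `0 ∉ conv(W·h)`. -/
theorem stmt_17 {n : ℕ} {V : Type*} [AddCommGroup V] [Module ℝ V]
    {W : Type*} [Group W] {M : CoxeterMatrix (Fin n)} (K : KMWeyl n V W M)
    (hdet : (K.A.map (Int.cast : ℤ → ℝ)).det ≠ 0)
    (hspan : Submodule.span ℝ (Set.range K.cor) = ⊤)
    (hblk : ∃ k : Fin n, ∀ μ : Fin n → ℝ,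
      (∀ j, j ∉ matComp K.A k → μ j = 0) → (∀ j, 0 ≤ μ j) →
      (∀ i ∈ matComp K.A k, 0 ≤ ∑ j, (K.A j i : ℝ) * μ j) → μ = 0)
    (lam : Fin n → ℝ) (h : V) (hh : h = ∑ j, lam j • K.cor j)
    (hC : ∀ i, 0 < K.α i h) :
    (∃ j, lam j < 0) ∧ (0 : V) ∉ convexHull ℝ (K.orb h) :=
  stmt_17_general K hblk lam h hh hC
end
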